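/- arXiv:2401.15116 — 3 statements merged into one kernel-verified Lean document; each statement's English description precedes it below -/
import Mathlib

section
/- Let q : Fin k → ℝ be prior probabilities (nonnegative, summing to 1) over k categories, and for each worker i let M_i : Fin k → Fin k → ℝ be a confusion matrix with M_i τ ℓ = Pr[x_i = ℓ | z* = τ], rows summing to 1. Fix a category ℓ and workers i, i'. Define Pr[x_i = ℓ] = q ℓ · M_i ℓ ℓ + Σ_{τ ≠ ℓ} q τ · M_i τ ℓ, and the conditional accuracy c_i^ℓ = q ℓ · M_i ℓ ℓ / Pr[x_i = ℓ]. Assume Pr[x_i = ℓ] > 0 and Y := Σ_{τ ≠ ℓ} q τ · M_i τ ℓ > 0. Then the agreement probability Pr[x_{i'} = ℓ | x_i = ℓ] = M_{i'} ℓ ℓ · c_i^ℓ + (1/Pr[x_i = ℓ]) · Σ_{τ ≠ ℓ} q τ · M_i τ ℓ · M_{i'} τ ℓ equals α · c_i^ℓ + β where α = M_{i'} ℓ ℓ − (Σ_{τ ≠ ℓ} q τ · M_i τ ℓ · M_{i'} τ ℓ)/Y and β = (Σ_{τ ≠ ℓ} q τ · M_i τ ℓ · M_{i'} τ ℓ)/Y;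 moreover α and β depend only on q, M_{i'}, and the entries M_i τ ℓ for τ ≠ ℓ (not on M_i ℓ ℓ). -/
open Finset

theorem stmt_1 (k : ℕ) (q : Fin k → ℝ) (Mi Mi' : Fin k → Fin k → ℝ) (ℓ : Fin k)
    (hq : ∀ τ, 0 ≤ q τ) (hqsum : ∑ τ, q τ = 1)
    (hMi : ∀ τ ℓ', 0 ≤ Mi τ ℓ') (hMirow : ∀ τ, ∑ ℓ', Mi τ ℓ' = 1)
    (hMi' : ∀ τ ℓ', 0 ≤ Mi' τ ℓ') (hMi'row : ∀ τ, ∑ ℓ', Mi' τ ℓ' = 1)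
    (Pr : ℝ) (hPr : Pr = q ℓ * Mi ℓ ℓ + ∑ τ ∈ univ \ {ℓ}, q τ * Mi τ ℓ)
    (hPrpos : 0 < Pr)
    (Y : ℝ) (hY : Y = ∑ τ ∈ univ \ {ℓ}, q τ * Mi τ ℓ) (hYpos : 0 < Y)
    (c : ℝ) (hc : c = q ℓ * Mi ℓ ℓ / Pr)
    (agree : ℝ)
    (hagree : agree = Mi' ℓ ℓ * c + (1 / Pr) * ∑ τ ∈ univ \ {ℓ}, q τ * Mi τ ℓ * Mi' τ ℓ) :
    agree =
      (Mi' ℓ ℓ - (∑ τ ∈ univ \ {ℓ}, q τ * Mi τ ℓ * Mi' τ ℓ) / Y) * c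
        + (∑ τ ∈ univ \ {ℓ}, q τ * Mi τ ℓ * Mi' τ ℓ) / Y := by
  have h1 : (1:ℝ) - c = Y / Pr := by
    rw [hc, hY, eq_div_iff hPrpos.ne', sub_mul, one_mul,
      div_mul_cancel₀ _ hPrpos.ne']
    rw [hPr]; ring
  set S := ∑ τ ∈ univ \ {ℓ}, q τ * Mi τ ℓ * Mi' τ ℓ
  have : (1 / Pr) * S = S / Y * (1 - c) := by
    rw [h1]; field_simp
  rw [hagree, this]; ring
end

section
/- An accuracy-only noise model with arbitrary priors is captured exactly by a level-1 IRT model: defining c_i = −log(1/p_i − 1) and d^ℓ = log((1/q^ℓ − 1)/(k−1)), the logistic expression 1/(1 + exp(d^ℓ − c_i)) equals the posterior Pr[z* = ℓ | x_i = ℓ] = q^ℓ p_i / (q^ℓ p_i + ((1−p_i)/(k−1))(1 − q^ℓ)). -/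
/-!
`exp (d - c)` is the product of the odds `(1/q - 1)/(k - 1)` and `1/p - 1`, i.e. the ratio of
`(1 - q)(1 - p)/(k - 1)` to `q p`, so the logistic expression is Bayes' rule written in odds form.
-/

lemma one_div_sub_one_pos {x : ℝ} (hx : 0 < x) (hx1 : x < 1) : 0 < 1 / x - 1 :=
  sub_pos.2 (one_lt_one_div hx hx1)

lemma exp_log_sub_neg_log {a b : ℝ} (ha : 0 < a) (hb : 0 < b) :
    Real.exp (Real.log a - -Real.log b) = a * b := by
  rw [sub_neg_eq_add, Real.exp_add, Real.exp_log ha, Real.exp_log hb]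

/-- Both sides equal `c q p / (c q p + (1 - q)(1 - p))`, also when that denominator vanishes,
since then both are the junk value `0`. -/
lemma one_div_one_add_odds_mul_odds {K : Type*} [Field K] {c q p : K}
    (hc : c ≠ 0) (hq : q ≠ 0) (hp : p ≠ 0) :
    1 / (1 + (1 / q - 1) / c * (1 / p - 1)) = q * p / (q * p + ((1 - p) / c) * (1 - q)) := by
  have hlhs : 1 + (1 / q - 1) / c * (1 / p - 1) = (c * q * p + (1 - q) * (1 - p)) / (c * q * p) := by
    field_simp
  have hrhs : q * p + ((1 - p) / c) * (1 - q) = (c * q * p + (1 - q) * (1 - p)) / c := by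
    field_simp
  rw [hlhs, hrhs, one_div_div, div_div_eq_mul_div]
  ring

theorem stmt_4 (k : ℕ) (hk : 2 ≤ k) (q p : ℝ)
    (hq : 0 < q) (hq1 : q < 1) (hp : 0 < p) (hp1 : p < 1) :
    1 / (1 + Real.exp (Real.log ((1 / q - 1) / ((k : ℝ) - 1)) - (-Real.log (1 / p - 1)))) =
      q * p / (q * p + ((1 - p) / ((k : ℝ) - 1)) * (1 - q)) := by
  have hk1 : (0 : ℝ) < (k : ℝ) - 1 := by
    have : (2 : ℝ) ≤ k := by exact_mod_cast hk
    linarith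
  rw [exp_log_sub_neg_log (div_pos (one_div_sub_one_pos hq hq1) hk1) (one_div_sub_one_pos hp hp1)]
  exact one_div_one_add_odds_mul_odds hk1.ne' hq.ne' hp.ne'
end

section
/- In the Dawid–Skene model, a sufficient condition for the slope α^ℓ = E_{i'}[M_{i'} ℓ ℓ] − E_{i'}[Σ_{τ≠ℓ} q τ M_i τ ℓ M_{i'} τ ℓ]/(Σ_{τ≠ℓ} q τ M_i τ ℓ) in the conditional Anna Karenina linear relation to be positive is that E_{i'}[M_{i'} ℓ ℓ] > E_{i'}[M_{i'} τ ℓ] for every τ ≠ ℓ. -/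
/-! Exchanging the two sums turns the subtracted term into an average of the expected entries
`∑ i', w i' * M' i' τ ℓ` with the weights `q τ * Mi τ ℓ / Y`; every such entry lies strictly below
`∑ i', w i' * M' i' ℓ ℓ`, and some weight is positive because `Y > 0`. -/

open Finset

theorem Finset.sum_mul_sum_mul_comm {R ι κ : Type*} [CommSemiring R] (s : Finset ι)
    (t : Finset κ) (w : ι → R) (c : κ → R) (f : ι → κ → R) :
    ∑ i ∈ s, w i * ∑ j ∈ t, c j * f i j = ∑ j ∈ t, c j * ∑ i ∈ s, w i * f i j := by
  simp_rw [mul_sum, mul_left_comm (w _)]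
  exact sum_comm

theorem Finset.sum_mul_lt_sum_mul_of_forall_lt {R ι : Type*} [Semiring R] [LinearOrder R]
    [IsStrictOrderedRing R] {s : Finset ι} {c b : ι → R} {a : R} (hc : ∀ i ∈ s, 0 ≤ c i)
    (hc_pos : 0 < ∑ i ∈ s, c i) (hb : ∀ i ∈ s, b i < a) :
    ∑ i ∈ s, c i * b i < (∑ i ∈ s, c i) * a := by
  obtain ⟨j, hj, hcj⟩ : ∃ j ∈ s, 0 < c j :=
    exists_lt_of_sum_lt (by simpa using hc_pos)
  rw [sum_mul]
  exact sum_lt_sum (fun i hi => mul_le_mul_of_nonneg_left (hb i hi).le (hc i hi))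
    ⟨j, hj, mul_lt_mul_of_pos_left (hb j hj) hcj⟩

theorem stmt_12_general (k : ℕ) (q : Fin k → ℝ) (Mi : Fin k → Fin k → ℝ) (ℓ : Fin k)
    (hq : ∀ τ, 0 ≤ q τ) (hMi : ∀ τ ℓ', 0 ≤ Mi τ ℓ')
    (W : Type*) [Fintype W] (w : W → ℝ) (M' : W → Fin k → Fin k → ℝ)
    (Y : ℝ) (hY : Y = ∑ τ ∈ univ \ {ℓ}, q τ * Mi τ ℓ) (hYpos : 0 < Y)
    (hdom : ∀ τ ∈ univ \ {ℓ}, ∑ i', w i' * M' i' τ ℓ < ∑ i', w i' * M' i' ℓ ℓ) :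
    0 < (∑ i', w i' * M' i' ℓ ℓ)
        - (∑ i', w i' * ∑ τ ∈ univ \ {ℓ}, q τ * Mi τ ℓ * M' i' τ ℓ) / Y := by
  rw [sub_pos, div_lt_iff₀ hYpos, sum_mul_sum_mul_comm, mul_comm, hY]
  exact sum_mul_lt_sum_mul_of_forall_lt (fun τ _ => mul_nonneg (hq τ) (hMi τ ℓ))
    (hY ▸ hYpos) hdom

theorem stmt_12 (k : ℕ) (q : Fin k → ℝ) (Mi : Fin k → Fin k → ℝ) (ℓ : Fin k)
    (hq : ∀ τ, 0 ≤ q τ) (hMi : ∀ τ ℓ', 0 ≤ Mi τ ℓ')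
    (W : Type*) [Fintype W] (w : W → ℝ) (M' : W → Fin k → Fin k → ℝ)
    (hw : ∀ i', 0 ≤ w i') (hwsum : ∑ i', w i' = 1)
    (Y : ℝ) (hY : Y = ∑ τ ∈ univ \ {ℓ}, q τ * Mi τ ℓ) (hYpos : 0 < Y)
    (hdom : ∀ τ ∈ univ \ {ℓ}, ∑ i', w i' * M' i' τ ℓ < ∑ i', w i' * M' i' ℓ ℓ) :
    0 < (∑ i', w i' * M' i' ℓ ℓ)
        - (∑ i', w i' * ∑ τ ∈ univ \ {ℓ}, q τ * Mi τ ℓ * M' i' τ ℓ) / Y :=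
  stmt_12_general k q Mi ℓ hq hMi W w M' Y hY hYpos hdom
end
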